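/- arXiv:2401.07499 — 2 statements merged into one kernel-verified Lean document; each statement's English description precedes it below -/
import Mathlib

section
/- Let N ≥ 2, d ≥ 2 be integers, let ψ : (Fin N → Fin d) → ℂ be a unit vector that is genuinely multipartite entangled (GME), and let 𝓕 be a family of subsets of Fin N. If ψ is 𝓕-UDP, then the hypergraph G_𝓕 with vertex set Fin N and edge set 𝓕 is connected: for every pair of distinct vertices u, v ∈ Fin N there exist edges e_1, …, e_s ∈ 𝓕 and pairwise distinct vertices v_1, …, v_{s+1} ∈ Fin N with v_1 = u, v_{s+1} = v, and {v_t, v_{t+1}} ⊆ e_t for every t ∈ {1, …, s}. -/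
open Finset

/-- Combine `x` defined on `S` with `z` defined on the complement of `S`
into a full assignment `Fin N → Fin d`. -/
def joinFun {N d : ℕ} (S : Finset (Fin N))
    (x : {i // i ∈ S} → Fin d) (z : {i // i ∉ S} → Fin d) : Fin N → Fin d :=
  fun i => if h : i ∈ S then x ⟨i, h⟩ else z ⟨i, h⟩

/-- The marginal (reduced density matrix) of the pure state `ψ` on the parties `S`. -/
noncomputable def marginal {N d : ℕ} (S : Finset (Fin N)) (ψ : (Fin N → Fin d) → ℂ)
    (x y : {i // i ∈ S} → Fin d) : ℂ :=
  ∑ z : {i // i ∉ S} → Fin d,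
    ψ (joinFun S x z) * (starRingEnd ℂ) (ψ (joinFun S y z))

/-- `ψ` is a unit vector. -/
def UnitVec {N d : ℕ} (ψ : (Fin N → Fin d) → ℂ) : Prop :=
  ∑ x, ‖ψ x‖ ^ 2 = 1

/-- `ψ` is genuinely multipartite entangled. -/
def GME {N d : ℕ} (ψ : (Fin N → Fin d) → ℂ) : Prop :=
  ∀ J : Finset (Fin N), J.Nonempty → J ≠ Finset.univ →
    ¬ ∃ (α : ({i // i ∈ J} → Fin d) → ℂ) (β : ({i // i ∉ J} → Fin d) → ℂ),
      ∀ x z, ψ (joinFun J x z) = α x * β z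

/-- `ψ` is uniquely determined by the family of marginals `𝓕` among pure states. -/
def UDP {N d : ℕ} (𝓕 : Finset (Finset (Fin N))) (ψ : (Fin N → Fin d) → ℂ) : Prop :=
  ∀ φ : (Fin N → Fin d) → ℂ, UnitVec φ →
    (∀ F ∈ 𝓕, marginal F φ = marginal F ψ) →
    ∃ c : ℂ, ‖c‖ = 1 ∧ φ = c • ψ

/-- There is a path between `u` and `v` in the hypergraph with vertex set `Fin N`
and edge set `𝓕`: a sequence of edges `e 0, …, e (s-1)` and pairwise distinct
vertices `vs 0 = u, …, vs s = v` with consecutive vertices contained in the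
corresponding edge. -/
def HasPath {N : ℕ} (𝓕 : Finset (Finset (Fin N))) (u v : Fin N) : Prop :=
  ∃ (s : ℕ) (e : Fin s → Finset (Fin N)) (vs : Fin (s + 1) → Fin N),
    (∀ t, e t ∈ 𝓕) ∧ Function.Injective vs ∧
    vs 0 = u ∧ vs (Fin.last s) = v ∧
    ∀ t : Fin s, vs t.castSucc ∈ e t ∧ vs t.succ ∈ e t

/-! If the hypergraph is disconnected, let `J` be the vertex set of a component. Every edge lies
in `J` or in `Jᶜ`, so the `𝓕`-marginals of a state are determined by its marginals on `J` and on
`Jᶜ`. Viewing `ψ` as a matrix `A` from `J`-configurations to `Jᶜ`-configurations, these are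
`A Aᴴ` and (the transpose of) `Aᴴ A`. For an eigenvector `v` of `A Aᴴ` with nonzero eigenvalue,
the Householder reflection `H` in `v⊥` is unitary and commutes with `A Aᴴ`, so `φ = H A` has the
same two marginals and the same norm. If `φ = c ψ`, applying both sides to `v` forces `c = -1`,
and then `A = v (vᴴ A) / ‖v‖²` has rank one: `ψ` is a product across `J`, contradicting GME. -/

open scoped ComplexOrder

namespace Matrix

variable {𝕜 m n : Type*} [RCLike 𝕜] [Fintype m] [DecidableEq m]

def householder (v : m → 𝕜) : Matrix m m 𝕜 :=
  1 - (2 / (star v ⬝ᵥ v)) • vecMulVec v (star v)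

variable {v : m → 𝕜}

lemma householder_conjTranspose (v : m → 𝕜) : (householder v)ᴴ = householder v := by
  have hs : star (star v ⬝ᵥ v) = star v ⬝ᵥ v := (star_dotProduct v v).symm
  simp [householder, conjTranspose_sub, conjTranspose_smul, star_div₀, hs]

lemma householder_mul_self (hv : v ≠ 0) : householder v * householder v = 1 := by
  have hs : star v ⬝ᵥ v ≠ 0 := dotProduct_star_self_eq_zero.not.2 hv
  have hW : vecMulVec v (star v) * vecMulVec v (star v) =
      (star v ⬝ᵥ v) • vecMulVec v (star v) := by
    rw [vecMulVec_mul_vecMulVec, vecMulVec_smul]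
  simp only [householder, sub_mul, mul_sub, one_mul, mul_one, smul_mul_smul_comm, hW, smul_smul]
  rw [mul_assoc, div_mul_cancel₀ _ hs]
  module

lemma householder_mem_unitaryGroup (hv : v ≠ 0) : householder v ∈ unitaryGroup m 𝕜 := by
  rw [mem_unitaryGroup_iff, star_eq_conjTranspose, householder_conjTranspose,
    householder_mul_self hv]

lemma householder_mulVec_self (hv : v ≠ 0) : householder v *ᵥ v = -v := by
  have hs : star v ⬝ᵥ v ≠ 0 := dotProduct_star_self_eq_zero.not.2 hv
  rw [householder, sub_mulVec, one_mulVec, smul_mulVec, vecMulVec_mulVec]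
  simp [smul_smul, div_mul_cancel₀ _ hs]
  module

lemma commute_householder {P : Matrix m m 𝕜} (hP : P.IsHermitian) {t : ℝ}
    (hPv : P *ᵥ v = (t : 𝕜) • v) : Commute (householder v) P := by
  have hvP : star v ᵥ* P = (t : 𝕜) • star v := by
    rw [← hP.eq, ← star_mulVec, hPv, star_smul, RCLike.star_def, RCLike.conj_ofReal]
  have hPW : P * vecMulVec v (star v) = (t : 𝕜) • vecMulVec v (star v) := by
    rw [mul_vecMulVec, hPv, smul_vecMulVec]
  have hWP : vecMulVec v (star v) * P = (t : 𝕜) • vecMulVec v (star v) := by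
    rw [vecMulVec_mul, hvP, vecMulVec_smul]
  simp only [Commute, SemiconjBy, householder, sub_mul, mul_sub, one_mul, mul_one,
    smul_mul, mul_smul_comm, hPW, hWP]

lemma eq_vecMulVec_of_householder_mul_eq_smul [Fintype n] {A : Matrix m n 𝕜} {t : ℝ}
    (ht : t ≠ 0) (hv : v ≠ 0) (hAv : (A * Aᴴ) *ᵥ v = (t : 𝕜) • v) {c : 𝕜}
    (hc : householder v * A = c • A) :
    A = vecMulVec ((1 / (star v ⬝ᵥ v)) • v) (star v ᵥ* A) := by
  have hc' : c = -1 := by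
    have h : householder v *ᵥ ((A * Aᴴ) *ᵥ v) = c • ((A * Aᴴ) *ᵥ v) := by
      rw [mulVec_mulVec, ← Matrix.mul_assoc, hc, Matrix.smul_mul, smul_mulVec]
    rw [hAv, mulVec_smul, householder_mulVec_self hv] at h
    have h' : (c + 1) • ((t : 𝕜) • v) = 0 := by rw [add_smul, ← h]; module
    simpa [ht, hv, add_eq_zero_iff_eq_neg] using h'
  subst hc'
  rw [householder, Matrix.sub_mul, Matrix.one_mul, Matrix.smul_mul, vecMulVec_mul] at hc
  rw [smul_vecMulVec]
  apply smul_right_injective _ (two_ne_zero : (2 : 𝕜) ≠ 0)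
  dsimp only
  linear_combination (norm := module) hc

lemma unitary_mul_mul_conjTranspose {α : Type*} [CommRing α] [StarRing α] [Fintype n]
    {U : Matrix m m α} (hU : U ∈ unitaryGroup m α) {A : Matrix m n α}
    (hUA : Commute U (A * Aᴴ)) : U * A * (U * A)ᴴ = A * Aᴴ := by
  rw [conjTranspose_mul, ← Matrix.mul_assoc, Matrix.mul_assoc U, hUA.eq, Matrix.mul_assoc,
    ← star_eq_conjTranspose, mem_unitaryGroup_iff.1 hU, Matrix.mul_one]

lemma conjTranspose_mul_unitary_mul {α : Type*} [CommRing α] [StarRing α] [Fintype n]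
    {U : Matrix m m α} (hU : U ∈ unitaryGroup m α) (A : Matrix m n α) :
    (U * A)ᴴ * (U * A) = Aᴴ * A := by
  rw [conjTranspose_mul, Matrix.mul_assoc, ← Matrix.mul_assoc Uᴴ, ← star_eq_conjTranspose,
    mem_unitaryGroup_iff'.1 hU, Matrix.one_mul]

end Matrix
open Matrix

section Bipartition

variable {N d : ℕ} (S : Finset (Fin N))

def splitEquiv : (Fin N → Fin d) ≃ ({i // i ∈ S} → Fin d) × ({i // i ∉ S} → Fin d) :=
  Equiv.piEquivPiSubtypeProd (· ∈ S) fun _ => Fin d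

lemma splitEquiv_symm_apply (x : {i // i ∈ S} → Fin d) (z : {i // i ∉ S} → Fin d) :
    (splitEquiv S).symm (x, z) = joinFun S x z := rfl

def coeffMatrixEquiv :
    ((Fin N → Fin d) → ℂ) ≃ Matrix ({i // i ∈ S} → Fin d) ({i // i ∉ S} → Fin d) ℂ :=
  ((splitEquiv S).arrowCongr (Equiv.refl ℂ)).trans (Equiv.curry _ _ _)

lemma coeffMatrixEquiv_apply (ψ : (Fin N → Fin d) → ℂ) x z :
    coeffMatrixEquiv S ψ x z = ψ (joinFun S x z) := rfl

lemma marginal_eq_mul_conjTranspose (ψ : (Fin N → Fin d) → ℂ) :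
    marginal S ψ = coeffMatrixEquiv S ψ * (coeffMatrixEquiv S ψ)ᴴ := by
  ext x y
  simp [marginal, mul_apply, coeffMatrixEquiv_apply]

lemma joinFun_compl (x : {i // i ∈ Sᶜ} → Fin d) (z : {i // i ∉ Sᶜ} → Fin d) :
    joinFun Sᶜ x z = joinFun S (fun i => z ⟨i, notMem_compl.2 i.2⟩)
      (fun i => x ⟨i, mem_compl.2 i.2⟩) := by
  ext i
  by_cases h : i ∈ S <;> simp [joinFun, h]

lemma marginal_compl_apply (ψ : (Fin N → Fin d) → ℂ) (x y : {i // i ∈ Sᶜ} → Fin d) :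
    marginal Sᶜ ψ x y = ((coeffMatrixEquiv S ψ)ᴴ * coeffMatrixEquiv S ψ)
      (fun i => y ⟨i, mem_compl.2 i.2⟩) (fun i => x ⟨i, mem_compl.2 i.2⟩) := by
  let e : {i // i ∉ Sᶜ} ≃ {i // i ∈ S} := Equiv.subtypeEquivRight fun _ => notMem_compl
  refine Fintype.sum_equiv (e.arrowCongr (Equiv.refl (Fin d))) _ _ fun z => ?_
  rw [joinFun_compl, joinFun_compl, mul_comm]
  rfl

lemma trace_marginal (ψ : (Fin N → Fin d) → ℂ) :
    trace (marginal S ψ) = ∑ f, (‖ψ f‖ ^ 2 : ℂ) := by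
  rw [← (splitEquiv S).symm.sum_comp, Fintype.sum_prod_type]
  simp only [trace, Matrix.diag, marginal, Complex.mul_conj, Complex.normSq_eq_norm_sq,
    Complex.ofReal_pow, splitEquiv_symm_apply]

lemma sum_norm_sq_eq_of_marginal_eq {φ ψ : (Fin N → Fin d) → ℂ}
    (h : marginal S φ = marginal S ψ) : ∑ f, ‖φ f‖ ^ 2 = ∑ f, ‖ψ f‖ ^ 2 := by
  have := congrArg trace h
  rw [trace_marginal, trace_marginal] at this
  exact_mod_cast this

end Bipartition

section Restriction

variable {N d : ℕ} {F S : Finset (Fin N)}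

def extendFun (F S : Finset (Fin N)) (x : {i // i ∈ F} → Fin d)
    (w : {i : {j // j ∉ F} // (i : Fin N) ∈ S} → Fin d) : {i // i ∈ S} → Fin d :=
  fun i => if h : (i : Fin N) ∈ F then x ⟨i, h⟩ else w ⟨⟨i, h⟩, i.2⟩

def glueFun (F S : Finset (Fin N)) (w : {i : {j // j ∉ F} // (i : Fin N) ∈ S} → Fin d)
    (z : {i // i ∉ S} → Fin d) : {i // i ∉ F} → Fin d :=
  fun i => if h : (i : Fin N) ∈ S then w ⟨i, h⟩ else z ⟨i, h⟩

lemma joinFun_glueFun (hFS : F ⊆ S) (x : {i // i ∈ F} → Fin d)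
    (w : {i : {j // j ∉ F} // (i : Fin N) ∈ S} → Fin d) (z : {i // i ∉ S} → Fin d) :
    joinFun F x (glueFun F S w z) = joinFun S (extendFun F S x w) z := by
  ext i
  by_cases hF : i ∈ F
  · simp [joinFun, extendFun, hF, hFS hF]
  · by_cases hS : i ∈ S <;> simp [joinFun, glueFun, extendFun, hF, hS]

def glueEquiv (hFS : F ⊆ S) :
    (({i : {j // j ∉ F} // (i : Fin N) ∈ S} → Fin d) × ({i // i ∉ S} → Fin d))
      ≃ ({i // i ∉ F} → Fin d) where
  toFun p := glueFun F S p.1 p.2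
  invFun z := (fun i => z i.1, fun i => z ⟨i.1, fun hF => i.2 (hFS hF)⟩)
  left_inv p := by ext i <;> simp [glueFun, i.2]
  right_inv z := by
    ext i
    by_cases h : (i : Fin N) ∈ S <;> simp [glueFun, h]

lemma marginal_eq_sum_marginal (hFS : F ⊆ S) (ψ : (Fin N → Fin d) → ℂ)
    (x y : {i // i ∈ F} → Fin d) :
    marginal F ψ x y = ∑ w, marginal S ψ (extendFun F S x w) (extendFun F S y w) := by
  rw [marginal, ← (glueEquiv hFS).sum_comp, Fintype.sum_prod_type]
  simp only [glueEquiv, Equiv.coe_fn_mk, joinFun_glueFun hFS, marginal]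

lemma marginal_eq_of_subset (hFS : F ⊆ S) {φ ψ : (Fin N → Fin d) → ℂ}
    (h : marginal S φ = marginal S ψ) : marginal F φ = marginal F ψ := by
  ext x y
  simp only [marginal_eq_sum_marginal hFS, h]

end Restriction

section Hypergraph

variable {N : ℕ} (𝓕 : Finset (Finset (Fin N)))

def edgeGraph : SimpleGraph (Fin N) :=
  SimpleGraph.fromRel fun a b => ∃ e ∈ 𝓕, a ∈ e ∧ b ∈ e

variable {𝓕}

lemma edgeGraph_adj {a b : Fin N} : (edgeGraph 𝓕).Adj a b ↔ a ≠ b ∧ ∃ e ∈ 𝓕, a ∈ e ∧ b ∈ e := by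
  simp only [edgeGraph, SimpleGraph.fromRel_adj, and_congr_right_iff]
  exact fun _ => ⟨fun h => h.elim id fun ⟨e, he, hb, ha⟩ => ⟨e, he, ha, hb⟩, Or.inl⟩

lemma hasPath_of_reachable {u v : Fin N} (h : (edgeGraph 𝓕).Reachable u v) : HasPath 𝓕 u v := by
  obtain ⟨p, hp⟩ := h.some.toPath
  have hadj (t : Fin p.length) : ∃ e ∈ 𝓕, p.getVert t ∈ e ∧ p.getVert (t + 1) ∈ e :=
    (edgeGraph_adj.1 (p.adj_getVert_succ t.isLt)).2
  choose e he hfst hsnd using hadj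
  refine ⟨p.length, e, fun t => p.getVert t, he, fun s t hst => Fin.ext ?_, by simp, by simp,
    fun t => ⟨hfst t, hsnd t⟩⟩
  exact hp.getVert_injOn (Nat.lt_succ_iff.1 s.isLt) (Nat.lt_succ_iff.1 t.isLt) hst

lemma subset_or_subset_compl_of_adj_closed {J : Finset (Fin N)}
    (hJ : ∀ a b, (edgeGraph 𝓕).Adj a b → a ∈ J → b ∈ J) {F : Finset (Fin N)} (hF : F ∈ 𝓕) :
    F ⊆ J ∨ F ⊆ Jᶜ := by
  by_cases h : ∃ a ∈ F, a ∈ J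
  · obtain ⟨a, haF, haJ⟩ := h
    refine Or.inl fun b hbF => ?_
    rcases eq_or_ne a b with rfl | hab
    · exact haJ
    · exact hJ a b (edgeGraph_adj.2 ⟨hab, F, hF, haF, hbF⟩) haJ
  · exact Or.inr fun b hbF => mem_compl.2 fun hbJ => h ⟨b, hbF, hbJ⟩

end Hypergraph

section Separation

variable {N d : ℕ} {ψ : (Fin N → Fin d) → ℂ} {J : Finset (Fin N)}

lemma GME.coeffMatrixEquiv_ne_vecMulVec (hψ : GME ψ) (hJ : J.Nonempty) (hJ' : J ≠ univ)
    (α : ({i // i ∈ J} → Fin d) → ℂ) (β : ({i // i ∉ J} → Fin d) → ℂ) :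
    coeffMatrixEquiv J ψ ≠ vecMulVec α β :=
  fun h => hψ J hJ hJ' ⟨α, β, fun x z => congrFun (congrFun h x) z⟩

theorem not_UDP_of_subset_or_subset_compl (hψ : UnitVec ψ) (hGME : GME ψ) (hJ : J.Nonempty)
    (hJ' : J ≠ univ) {𝓕 : Finset (Finset (Fin N))} (h𝓕 : ∀ F ∈ 𝓕, F ⊆ J ∨ F ⊆ Jᶜ) :
    ¬ UDP 𝓕 ψ := by
  intro hUDP
  set A := coeffMatrixEquiv J ψ
  have hA : A ≠ 0 := by simpa using hGME.coeffMatrixEquiv_ne_vecMulVec hJ hJ' 0 0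
  obtain ⟨v, t, ht, hv, hAv⟩ :=
    (isHermitian_mul_conjTranspose_self A).exists_eigenvector_of_ne_zero
      (self_mul_conjTranspose_eq_zero.not.2 hA)
  set φ := (coeffMatrixEquiv J).symm (householder v * A)
  have hφ : coeffMatrixEquiv J φ = householder v * A := Equiv.apply_symm_apply _ _
  have hφJ : marginal J φ = marginal J ψ := by
    rw [marginal_eq_mul_conjTranspose, marginal_eq_mul_conjTranspose, hφ,
      unitary_mul_mul_conjTranspose (householder_mem_unitaryGroup hv)
        (commute_householder (isHermitian_mul_conjTranspose_self A) hAv)]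
  have hφJc : marginal Jᶜ φ = marginal Jᶜ ψ := by
    ext x y
    rw [marginal_compl_apply, marginal_compl_apply, hφ,
      conjTranspose_mul_unitary_mul (householder_mem_unitaryGroup hv)]
  obtain ⟨c, -, hc⟩ := hUDP φ ((sum_norm_sq_eq_of_marginal_eq J hφJ).trans hψ) fun F hF =>
    (h𝓕 F hF).elim (marginal_eq_of_subset · hφJ) (marginal_eq_of_subset · hφJc)
  refine hGME.coeffMatrixEquiv_ne_vecMulVec hJ hJ' _ _
    (eq_vecMulVec_of_householder_mul_eq_smul ht hv hAv (c := c) ?_)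
  rw [← hφ, hc]
  rfl

end Separation

theorem gme_UDP_implies_connected_general (N d : ℕ)
    (ψ : (Fin N → Fin d) → ℂ) (hψ : UnitVec ψ) (hGME : GME ψ)
    (𝓕 : Finset (Finset (Fin N))) (hUDP : UDP 𝓕 ψ) :
    ∀ u v : Fin N, u ≠ v → HasPath 𝓕 u v := by
  classical
  intro u v _
  by_contra hnp
  let J := univ.filter ((edgeGraph 𝓕).Reachable u)
  have hvJ : v ∉ J := fun hv => hnp (hasPath_of_reachable (mem_filter.1 hv).2)
  have hJ : J ≠ univ := fun h => hvJ (h ▸ mem_univ v)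
  have huJ : u ∈ J := mem_filter.2 ⟨mem_univ u, .rfl⟩
  refine not_UDP_of_subset_or_subset_compl hψ hGME ⟨u, huJ⟩ hJ
    (fun F => subset_or_subset_compl_of_adj_closed fun a b hab ha => ?_) hUDP
  simpa [J] using (mem_filter.1 ha).2.trans hab.reachable

/-- If a GME pure state `ψ` is `𝓕`-UDP, then the hypergraph
`G_𝓕` is connected. -/
theorem gme_UDP_implies_connected (N d : ℕ) (hN : 2 ≤ N) (hd : 2 ≤ d)
    (ψ : (Fin N → Fin d) → ℂ) (hψ : UnitVec ψ) (hGME : GME ψ)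
    (𝓕 : Finset (Finset (Fin N))) (hUDP : UDP 𝓕 ψ) :
    ∀ u v : Fin N, u ≠ v → HasPath 𝓕 u v :=
  gme_UDP_implies_connected_general N d ψ hψ hGME 𝓕 hUDP
end

section
/- Let N, d, k, r be positive integers with k ≤ N, and let rows : Fin r → (Fin N → Fin d) satisfy the packing property of strength k: for every subset T ⊆ Fin N with |T| = k, the map i ↦ (rows i) restricted to T is injective. Let a : Fin r → ℂ, let θ : Fin r → ℝ be arbitrary phases, let ψ be the state with ψ(rows i) = a_i (and 0 elsewhere), and let φ be the state with φ(rows i) = exp(√(−1)·θ_i) · a_i (and 0 elsewhere). Then ρ_S(φ) = ρ_S(ψ) for every subset S ⊆ Fin N with |S| = N − k; that is, all (N − k)-body marginals of such a state are invariant under arbitrary phase changes of its coefficients. -/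
open Finset

/-- `rows` is a packing array of strength `k`: in any `k` columns, every `k`-tuple
appears at most once. -/
def IsPackingArray {r N d : ℕ} (k : ℕ) (rows : Fin r → (Fin N → Fin d)) : Prop :=
  ∀ T : Finset (Fin N), T.card = k →
    Function.Injective (fun i : Fin r => fun j : {x // x ∈ T} => rows i j.1)

/- Each term of `marginal S φ x y` pairs two basis states that agree off `S`.  On the rows of a
packing array of strength `k`, the `k` coordinates off `S` already determine the row, so every
nonzero term pairs a row with itself and equals `‖φ (rows i)‖ ^ 2`, which a phase does not
change. -/

theorem joinFun_of_notMem {N d : ℕ} {S : Finset (Fin N)} (x : {i // i ∈ S} → Fin d)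
    (z : {i // i ∉ S} → Fin d) {i : Fin N} (hi : i ∉ S) : joinFun S x z i = z ⟨i, hi⟩ :=
  dif_neg hi

theorem marginal_eq_of_norm_eq {N d : ℕ} {S : Finset (Fin N)} {φ ψ : (Fin N → Fin d) → ℂ}
    (hnorm : ∀ u, ‖φ u‖ = ‖ψ u‖)
    (hsupp : ∀ u v, ψ u ≠ 0 → ψ v ≠ 0 → (∀ i ∉ S, u i = v i) → u = v) :
    marginal S φ = marginal S ψ := by
  have hzero : ∀ u, ψ u = 0 → φ u = 0 := fun u hu =>
    norm_eq_zero.mp (by rw [hnorm, hu, norm_zero])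
  funext x y
  refine sum_congr rfl fun z _ => ?_
  by_cases hx : ψ (joinFun S x z) = 0
  · simp [hx, hzero _ hx]
  by_cases hy : ψ (joinFun S y z) = 0
  · simp [hy, hzero _ hy]
  have hxy : joinFun S x z = joinFun S y z :=
    hsupp _ _ hx hy fun i hi => by rw [joinFun_of_notMem x z hi, joinFun_of_notMem y z hi]
  rw [← hxy, Complex.mul_conj, Complex.mul_conj, Complex.normSq_eq_norm_sq,
    Complex.normSq_eq_norm_sq, hnorm]

theorem IsPackingArray.eq_of_eqOn {r N d k : ℕ} {rows : Fin r → (Fin N → Fin d)}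
    (hPA : IsPackingArray k rows) {T : Finset (Fin N)} (hT : T.card = k) {i i' : Fin r}
    (h : ∀ j ∈ T, rows i j = rows i' j) : i = i' :=
  hPA T hT <| funext fun j => h j.1 j.2

theorem packing_array_marginal_phase_invariant_general (N d k r : ℕ)
    (hkN : k ≤ N)
    (rows : Fin r → (Fin N → Fin d)) (hPA : IsPackingArray k rows)
    (a : Fin r → ℂ) (θ : Fin r → ℝ)
    (ψ φ : (Fin N → Fin d) → ℂ)
    (hψrows : ∀ i, ψ (rows i) = a i)
    (hψzero : ∀ x : Fin N → Fin d, (∀ i, x ≠ rows i) → ψ x = 0)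
    (hφrows : ∀ i, φ (rows i) = Complex.exp (Complex.I * (θ i : ℂ)) * a i)
    (hφzero : ∀ x : Fin N → Fin d, (∀ i, x ≠ rows i) → φ x = 0) :
    ∀ S : Finset (Fin N), S.card = N - k → marginal S φ = marginal S ψ := by
  intro S hS
  have hrow : ∀ u, ψ u ≠ 0 → ∃ i, u = rows i := fun u hu => by
    by_contra! h
    exact hu (hψzero u h)
  have hcard : Sᶜ.card = k := by
    rw [card_compl, Fintype.card_fin, hS]
    omega
  refine marginal_eq_of_norm_eq (fun u => ?_) fun u v hu hv huv => ?_
  · by_cases hu : ∀ i, u ≠ rows i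
    · rw [hφzero u hu, hψzero u hu]
    · obtain ⟨i, rfl⟩ := not_forall_not.mp hu
      rw [hφrows, hψrows, norm_mul, Complex.norm_exp_I_mul_ofReal, one_mul]
  · obtain ⟨i, rfl⟩ := hrow u hu
    obtain ⟨j, rfl⟩ := hrow v hv
    rw [hPA.eq_of_eqOn hcard fun m hm => huv m (mem_compl.mp hm)]

/-- All `(N - k)`-body marginals of a state supported on the rows
of a packing array of strength `k` are invariant under arbitrary phase changes
of its coefficients. -/
theorem packing_array_marginal_phase_invariant (N d k r : ℕ)
    (hN : 0 < N) (hd : 0 < d) (hk : 0 < k) (hr : 0 < r) (hkN : k ≤ N)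
    (rows : Fin r → (Fin N → Fin d)) (hPA : IsPackingArray k rows)
    (a : Fin r → ℂ) (θ : Fin r → ℝ)
    (ψ φ : (Fin N → Fin d) → ℂ)
    (hψrows : ∀ i, ψ (rows i) = a i)
    (hψzero : ∀ x : Fin N → Fin d, (∀ i, x ≠ rows i) → ψ x = 0)
    (hφrows : ∀ i, φ (rows i) = Complex.exp (Complex.I * (θ i : ℂ)) * a i)
    (hφzero : ∀ x : Fin N → Fin d, (∀ i, x ≠ rows i) → φ x = 0) :
    ∀ S : Finset (Fin N), S.card = N - k → marginal S φ = marginal S ψ :=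
  packing_array_marginal_phase_invariant_general N d k r hkN rows hPA a θ ψ φ hψrows hψzero hφrows
    hφzero
end
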